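/- (Proposition on the sign of the coefficient, Region II.) Let α > 1 and β > 0, and suppose 𝒟(k) = (α + βk²)·sinh(k) − k·cosh(k) has exactly two roots k₁ < k₂ in (0,∞), both simple, with 2k₁ ≠ k₂. For i = 1, 2 let m̃₂₁⁽²⁾(kᵢ) = −(9αβ + 16)kᵢ + 12αβkᵢ·cosh(2kᵢ) − 3αβkᵢ·cosh(4kᵢ) + 8α(2c(kᵢ) − 1)·sinh(2kᵢ) + 4α(c(kᵢ) + 2)·sinh(4kᵢ), with c(kᵢ) = −1 − kᵢ(cosh(2kᵢ) + 2)/𝒟(2kᵢ). Then m̃₂₁⁽²⁾(k₂) < 0; moreover m̃₂₁⁽²⁾(k₁) < 0 if 2k₁ > k₂, and m̃₂₁⁽²⁾(k₁) > 0 if 2k₁ < k₂. -/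

import Mathlib

/-!
At a root `k` of `𝒟`, the relation `(α + βk²) sinh k = k cosh k` turns `𝒟(2k)` into
`2k sinh k (3βk cosh k - sinh k)` and eliminates `α` from `m̃₂₁⁽²⁾ · 𝒟(2k)`, which becomes
`2k² Q(sinh k, cosh k, βk sinh k)` for an explicit polynomial `Q` (`coeffPoly`). The same relation gives
`0 ≤ βk sinh k ≤ cosh k - 1` when `α ≥ 1`, and on that range `Q < 0`. Hence `m̃₂₁⁽²⁾(k)` has the
sign opposite to `𝒟(2k)`. Since `𝒟 > 0` for large `k` and `k₂` is the last, simple, root,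
`𝒟 > 0` on `(k₂, ∞)` and `𝒟 < 0` on `(k₁, k₂)`; so `𝒟(2k₂) > 0`, while `𝒟(2k₁)` is positive or
negative according as `2k₁ > k₂` or `2k₁ < k₂`.
-/

/-- The linear dispersion function `𝒟(k) = (α + βk²)·sinh(k) − k·cosh(k)`. -/
noncomputable def disp (α β k : ℝ) : ℝ :=
  (α + β * k ^ 2) * Real.sinh k - k * Real.cosh k

open Real Set Filter Topology

theorem IsPreconnected.forall_pos_or_forall_neg {X Y : Type*} [TopologicalSpace X]
    [LinearOrder Y] [TopologicalSpace Y] [OrderClosedTopology Y] [Zero Y]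
    {s : Set X} (hs : IsPreconnected s) {f : X → Y} (hf : ContinuousOn f s)
    (hne : ∀ x ∈ s, f x ≠ 0) : (∀ x ∈ s, 0 < f x) ∨ (∀ x ∈ s, f x < 0) := by
  by_contra! h
  obtain ⟨⟨a, ha, hfa⟩, ⟨b, hb, hfb⟩⟩ := h
  obtain ⟨x, hx, hfx⟩ := hs.intermediate_value₂ ha hb hf continuousOn_const hfa hfb
  exact hne x hx hfx

theorem neg_on_Ioo_of_deriv_ne_zero {f : ℝ → ℝ} {a b : ℝ} (hab : a < b)
    (hf : ContinuousOn f (Ioo a b)) (hne : ∀ x ∈ Ioo a b, f x ≠ 0) (hfb : f b = 0)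
    (hright : ∀ᶠ x in 𝓝[>] b, 0 ≤ f x) (hd : deriv f b ≠ 0) : ∀ x ∈ Ioo a b, f x < 0 := by
  refine (isPreconnected_Ioo.forall_pos_or_forall_neg hf hne).resolve_left fun hpos => hd ?_
  have hleft : ∀ᶠ x in 𝓝[<] b, 0 ≤ f x :=
    eventually_of_mem (Ioo_mem_nhdsLT hab) fun x hx => (hpos x hx).le
  have hne' : ∀ᶠ x in 𝓝[≠] b, f b ≤ f x := by
    rw [hfb, ← nhdsLT_sup_nhdsGT]
    exact eventually_sup.mpr ⟨hleft, hright⟩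
  have hmin : IsLocalMin f b := by
    filter_upwards [eventually_nhdsWithin_iff.mp hne'] with x hx
    rcases eq_or_ne x b with rfl | hxb
    exacts [le_rfl, hx hxb]
  exact hmin.deriv_eq_zero

section Dispersion

variable {α β k : ℝ}

theorem continuous_disp : Continuous (disp α β) := by
  unfold disp
  fun_prop

theorem disp_pos_of_one_le_mul (hα : 1 ≤ α) (hk : 0 < k) (hβk : 1 ≤ β * k) :
    0 < disp α β k := by
  have hs : k < sinh k := self_lt_sinh_iff.mpr hk
  have hexp : cosh k - sinh k ≤ 1 := by
    rw [cosh_sub_sinh]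
    exact exp_le_one_iff.mpr (by linarith)
  have hαs : sinh k ≤ α * sinh k := le_mul_of_one_le_left (by linarith) hα
  have hβs : k * sinh k ≤ β * k ^ 2 * sinh k := by
    have := mul_le_mul_of_nonneg_right hβk (mul_pos hk (hk.trans hs)).le
    linarith
  unfold disp
  nlinarith

noncomputable def coeffPoly (s h v : ℝ) : ℝ :=
  -72 - 72*h*v - 120*s^2 + 96*v^2 + 64*s^2*h*v - 128*s^4 - 72*s^2*v^2
    + 184*s^4*h*v + 72*s^2*h*v^3 - 64*s^6 - 192*s^4*v^2

theorem coeffPoly_neg {s h v : ℝ} (hh2 : h ^ 2 = 1 + s ^ 2) (hv : 0 ≤ v) (hvh : v ≤ h - 1) :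
    coeffPoly s h v < 0 := by
  obtain ⟨w, hw, rfl⟩ : ∃ w, 0 ≤ w ∧ h = 1 + v + w := ⟨h - 1 - v, by linarith, by ring⟩
  -- with `h = 1 + v + w`, every coefficient of `-72 - coeffPoly` is nonnegative
  have hexp : coeffPoly s (1 + v + w) v = -72 - (72*v + 96*(w*v) + 12*((v + w)^3*(w*v^2))
      + 240*(v + w) + 152*((v + w)*w) + 144*((v + w)*w^2) + 144*((v + w)*w^3)
      + 480*(v + w)^2 + 640*((v + w)^2*w) + 408*((v + w)^2*w^2) + 216*((v + w)^2*w^3)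
      + 240*(v + w)^3 + 288*((v + w)^3*w) + 120*((v + w)^3*w^2) + 60*((v + w)^3*w^3)
      + 56*(v + w)^4 + 32*((v + w)^4*w) + 16*(v + w)^5 + 4*((v + w)^5*w)) := by
    unfold coeffPoly
    grind
  rw [hexp, sub_neg]
  exact (by norm_num : (-72 : ℝ) < 0).trans_le (by positivity)

theorem disp_two_mul_of_disp_eq_zero (hroot : disp α β k = 0) :
    disp α β (2 * k) = 2 * k * sinh k * (3 * β * k * cosh k - sinh k) := by
  have hroot' := sub_eq_zero.mp hroot
  rw [disp, sinh_two_mul, cosh_two_mul]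
  linear_combination 2 * cosh k * hroot'

theorem mul_sinh_le_cosh_sub_one_of_disp_eq_zero (hα : 1 ≤ α) (hk : 0 < k)
    (hroot : disp α β k = 0) : β * k * sinh k ≤ cosh k - 1 := by
  have hroot' := sub_eq_zero.mp hroot
  have hs : k < sinh k := self_lt_sinh_iff.mpr hk
  have hαs : sinh k ≤ α * sinh k := le_mul_of_one_le_left (by linarith) hα
  refine le_of_mul_le_mul_left ?_ hk
  linarith

/-- `c(k)` -/
noncomputable def coeffC (α β k : ℝ) : ℝ :=
  -1 - k * (cosh (2 * k) + 2) / disp α β (2 * k)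

/-- `m̃₂₁⁽²⁾(k)` -/
noncomputable def coeffM (α β k : ℝ) : ℝ :=
  -(9 * α * β + 16) * k + 12 * α * β * k * cosh (2 * k) - 3 * α * β * k * cosh (4 * k)
    + 8 * α * (2 * coeffC α β k - 1) * sinh (2 * k) + 4 * α * (coeffC α β k + 2) * sinh (4 * k)

theorem coeffM_mul_disp_two_mul (hroot : disp α β k = 0) (hE : disp α β (2 * k) ≠ 0) :
    coeffM α β k * disp α β (2 * k) =
      2 * k ^ 2 * coeffPoly (sinh k) (cosh k) (β * k * sinh k) := by
  have hroot' := sub_eq_zero.mp hroot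
  have hh2 := cosh_sq' k
  have hs2 : sinh (2 * k) = 2 * sinh k * cosh k := sinh_two_mul k
  have hc2 : cosh (2 * k) = 2 * cosh k ^ 2 - 1 := by linear_combination cosh_two_mul k - hh2
  have hs4 : sinh (4 * k) = 2 * (2 * sinh k * cosh k) * (2 * cosh k ^ 2 - 1) := by
    rw [show 4 * k = 2 * (2 * k) by ring, sinh_two_mul, hs2, hc2]
  have hc4 : cosh (4 * k) = 2 * (2 * cosh k ^ 2 - 1) ^ 2 - 1 := by
    rw [show 4 * k = 2 * (2 * k) by ring, cosh_two_mul, hs2, hc2]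
    linear_combination -4 * cosh k ^ 2 * hh2
  have hcE : coeffC α β k * disp α β (2 * k) = -disp α β (2 * k) - k * (cosh (2 * k) + 2) := by
    rw [coeffC, sub_mul, div_mul_cancel₀ _ hE]
    ring
  rw [disp_two_mul_of_disp_eq_zero hroot, hc2] at hcE
  rw [coeffM, hs2, hc2, hs4, hc4, disp_two_mul_of_disp_eq_zero hroot, coeffPoly]
  grind

theorem coeffM_mul_disp_two_mul_neg (hα : 1 ≤ α) (hβ : 0 ≤ β) (hk : 0 < k)
    (hroot : disp α β k = 0) (hE : disp α β (2 * k) ≠ 0) :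
    coeffM α β k * disp α β (2 * k) < 0 := by
  rw [coeffM_mul_disp_two_mul hroot hE]
  refine mul_neg_of_pos_of_neg (by positivity) (coeffPoly_neg (cosh_sq' k) ?_ ?_)
  · have := sinh_pos_iff.mpr hk
    positivity
  · exact mul_sinh_le_cosh_sub_one_of_disp_eq_zero hα hk hroot

theorem disp_pos_of_forall_ne_zero (hα : 1 ≤ α) (hβ : 0 < β) {k₀ : ℝ} (hk₀ : 0 < k₀)
    (hne : ∀ x ∈ Ioi k₀, disp α β x ≠ 0) : ∀ x ∈ Ioi k₀, 0 < disp α β x := by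
  refine (isPreconnected_Ioi.forall_pos_or_forall_neg continuous_disp.continuousOn
    hne).resolve_right fun hneg => ?_
  have hx : k₀ + β⁻¹ ∈ Ioi k₀ := lt_add_of_pos_right k₀ (inv_pos.mpr hβ)
  refine (hneg _ hx).not_gt (disp_pos_of_one_le_mul hα (hk₀.trans hx) ?_)
  rw [mul_add, mul_inv_cancel₀ hβ.ne']
  linarith [mul_pos hβ hk₀]

end Dispersion

theorem stmt_12_general (α β k₁ k₂ : ℝ) (hα : 1 < α) (hβ : 0 < β)
    (hk₁ : 0 < k₁) (hlt : k₁ < k₂)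
    (h1 : disp α β k₁ = 0) (h2 : disp α β k₂ = 0)
    (huniq : ∀ k : ℝ, 0 < k → disp α β k = 0 → k = k₁ ∨ k = k₂)
    (hd2 : deriv (disp α β) k₂ ≠ 0)
    (c₁ c₂ m₁ m₂ : ℝ)
    (hc₁ : c₁ = -1 - k₁ * (Real.cosh (2 * k₁) + 2) / disp α β (2 * k₁))
    (hc₂ : c₂ = -1 - k₂ * (Real.cosh (2 * k₂) + 2) / disp α β (2 * k₂))
    (hm₁ : m₁ = -(9 * α * β + 16) * k₁ + 12 * α * β * k₁ * Real.cosh (2 * k₁)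
        - 3 * α * β * k₁ * Real.cosh (4 * k₁)
        + 8 * α * (2 * c₁ - 1) * Real.sinh (2 * k₁)
        + 4 * α * (c₁ + 2) * Real.sinh (4 * k₁))
    (hm₂ : m₂ = -(9 * α * β + 16) * k₂ + 12 * α * β * k₂ * Real.cosh (2 * k₂)
        - 3 * α * β * k₂ * Real.cosh (4 * k₂)
        + 8 * α * (2 * c₂ - 1) * Real.sinh (2 * k₂)
        + 4 * α * (c₂ + 2) * Real.sinh (4 * k₂)) :
    m₂ < 0 ∧ (k₂ < 2 * k₁ → m₁ < 0) ∧ (2 * k₁ < k₂ → 0 < m₁) := by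
  have hk₂ : 0 < k₂ := hk₁.trans hlt
  have hpos : ∀ x ∈ Ioi k₂, 0 < disp α β x :=
    disp_pos_of_forall_ne_zero hα.le hβ hk₂ fun x hx h0 => by
      rcases huniq x (hk₂.trans hx) h0 with rfl | rfl <;> linarith [mem_Ioi.mp hx]
  have hneg : ∀ x ∈ Ioo k₁ k₂, disp α β x < 0 := by
    refine neg_on_Ioo_of_deriv_ne_zero hlt continuous_disp.continuousOn (fun x hx h0 => ?_) h2
      (eventually_nhdsWithin_of_forall fun x hx => (hpos x hx).le) hd2
    rcases huniq x (hk₁.trans hx.1) h0 with rfl | rfl <;> linarith [hx.1, hx.2]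
  have hsign : ∀ k, 0 < k → disp α β k = 0 → disp α β (2 * k) ≠ 0 →
      coeffM α β k * disp α β (2 * k) < 0 := fun k hk hroot hE =>
    coeffM_mul_disp_two_mul_neg hα.le hβ.le hk hroot hE
  -- afterwards `m₁` and `m₂` are `coeffM α β k₁` and `coeffM α β k₂` up to unfolding
  subst hc₁ hc₂ hm₁ hm₂
  refine ⟨?_, fun h => ?_, fun h => ?_⟩
  · have hE := hpos (2 * k₂) (by rw [mem_Ioi]; linarith)
    exact neg_of_mul_neg_left (hsign k₂ hk₂ h2 hE.ne') hE.le
  · have hE := hpos (2 * k₁) h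
    exact neg_of_mul_neg_left (hsign k₁ hk₁ h1 hE.ne') hE.le
  · have hE := hneg (2 * k₁) ⟨by linarith, h⟩
    exact pos_of_mul_neg_left (hsign k₁ hk₁ h1 hE.ne) hE.le

/-- In Region II, with two positive simple roots `k₁ < k₂` and `2k₁ ≠ k₂`, the
coefficient `m̃₂₁⁽²⁾(k₂)` is negative, while `m̃₂₁⁽²⁾(k₁)` is negative iff `2k₁ > k₂`. -/
theorem stmt_12 (α β k₁ k₂ : ℝ) (hα : 1 < α) (hβ : 0 < β)
    (hk₁ : 0 < k₁) (hlt : k₁ < k₂)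
    (h1 : disp α β k₁ = 0) (h2 : disp α β k₂ = 0)
    (huniq : ∀ k : ℝ, 0 < k → disp α β k = 0 → k = k₁ ∨ k = k₂)
    (hd1 : deriv (disp α β) k₁ ≠ 0) (hd2 : deriv (disp α β) k₂ ≠ 0)
    (hne : 2 * k₁ ≠ k₂)
    (c₁ c₂ m₁ m₂ : ℝ)
    (hc₁ : c₁ = -1 - k₁ * (Real.cosh (2 * k₁) + 2) / disp α β (2 * k₁))
    (hc₂ : c₂ = -1 - k₂ * (Real.cosh (2 * k₂) + 2) / disp α β (2 * k₂))
    (hm₁ : m₁ = -(9 * α * β + 16) * k₁ + 12 * α * β * k₁ * Real.cosh (2 * k₁)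
        - 3 * α * β * k₁ * Real.cosh (4 * k₁)
        + 8 * α * (2 * c₁ - 1) * Real.sinh (2 * k₁)
        + 4 * α * (c₁ + 2) * Real.sinh (4 * k₁))
    (hm₂ : m₂ = -(9 * α * β + 16) * k₂ + 12 * α * β * k₂ * Real.cosh (2 * k₂)
        - 3 * α * β * k₂ * Real.cosh (4 * k₂)
        + 8 * α * (2 * c₂ - 1) * Real.sinh (2 * k₂)
        + 4 * α * (c₂ + 2) * Real.sinh (4 * k₂)) :
    m₂ < 0 ∧ (k₂ < 2 * k₁ → m₁ < 0) ∧ (2 * k₁ < k₂ → 0 < m₁) :=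
  stmt_12_general α β k₁ k₂ hα hβ hk₁ hlt h1 h2 huniq hd2 c₁ c₂ m₁ m₂ hc₁ hc₂ hm₁ hm₂
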